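/- Let (U,V) be a pair of random variables on a probability space (Ω, 𝓕, P), each uniformly distributed on [0,1] (representing a copula C). Let G, H : ℝ → ℝ be arbitrary cumulative distribution functions (nondecreasing, right-continuous, with limit 0 at −∞ and 1 at +∞), not necessarily continuous or strictly increasing, satisfying G ⪯st H, and define X := G⁻¹(U) and Y := H⁻¹(V) via the generalized inverse G⁻¹(u) := sInf {x : u ≤ G(x)}. Then P(X ≤ Y) ≥ P(U ≤ V); i.e., η(C,G,H) ≥ η(C) also for general distribution functions G ⪯st H. -/

import Mathlib

open MeasureTheory Set

noncomputable section

/-- A cumulative distribution function on ℝ. -/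
def IsCDF (G : ℝ → ℝ) : Prop :=
  Monotone G ∧ (∀ x, ContinuousWithinAt G (Ici x) x) ∧
    Filter.Tendsto G Filter.atBot (nhds 0) ∧ Filter.Tendsto G Filter.atTop (nhds 1)

/-- The class 𝒢: CDFs that are continuous and strictly increasing where 0 < G < 1. -/
def MemG (G : ℝ → ℝ) : Prop :=
  IsCDF G ∧ Continuous G ∧ StrictMonoOn G {x | 0 < G x ∧ G x < 1}

/-- Generalized inverse (quantile function). -/
def Ginv (G : ℝ → ℝ) (u : ℝ) : ℝ := sInf {x | u ≤ G x}

/-- Usual stochastic ordering between CDFs: G1 ⪯st G2 iff G2 ≤ G1 pointwise. -/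
def StOrd (G1 G2 : ℝ → ℝ) : Prop := ∀ t, G2 t ≤ G1 t

/-- A random variable uniformly distributed on [0,1]. -/
def IsUniform01 {Ω : Type*} [MeasurableSpace Ω] (P : Measure Ω) (U : Ω → ℝ) : Prop :=
  Measurable U ∧ Measure.map U P = volume.restrict (Icc 0 1)

/-! A uniform variable lies a.s. in `(0, 1)`, where the quantile sets `{x | u ≤ G x}` are
nonempty and bounded below, so `sInf` is a genuine infimum rather than a junk value. There `Ginv`
is monotone in the level and in the stochastic order, hence `U ≤ V` forces `G⁻¹(U) ≤ H⁻¹(V)`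
almost surely. -/

theorem bddBelow_setOf_le_of_tendsto_atBot {G : ℝ → ℝ}
    (hG : Filter.Tendsto G Filter.atBot (nhds 0)) {u : ℝ} (hu : 0 < u) :
    BddBelow {x | u ≤ G x} := by
  obtain ⟨x₀, hx₀⟩ := Filter.eventually_atBot.mp (hG.eventually_lt_const hu)
  exact ⟨x₀, fun x hx => le_of_not_ge fun hle => (hx₀ x hle).not_ge hx⟩

theorem nonempty_setOf_le_of_tendsto_atTop {H : ℝ → ℝ}
    (hH : Filter.Tendsto H Filter.atTop (nhds 1)) {v : ℝ} (hv : v < 1) :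
    {x | v ≤ H x}.Nonempty :=
  let ⟨x, hx⟩ := (hH.eventually_const_lt hv).exists
  ⟨x, hx.le⟩

theorem Ginv_le_Ginv_of_stOrd {G H : ℝ → ℝ}
    (hG : Filter.Tendsto G Filter.atBot (nhds 0)) (hH : Filter.Tendsto H Filter.atTop (nhds 1))
    (hst : StOrd G H) {u v : ℝ} (hu : 0 < u) (hv : v < 1) (huv : u ≤ v) :
    Ginv G u ≤ Ginv H v :=
  csInf_le_csInf (bddBelow_setOf_le_of_tendsto_atBot hG hu)
    (nonempty_setOf_le_of_tendsto_atTop hH hv) fun x hx => huv.trans (hx.trans (hst x))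

theorem IsUniform01.ae_mem_Ioo {Ω : Type*} [MeasurableSpace Ω] {P : Measure Ω} {U : Ω → ℝ}
    (hU : IsUniform01 P U) : ∀ᵐ ω ∂P, U ω ∈ Ioo (0 : ℝ) 1 := by
  have h : ∀ᵐ x ∂(Measure.map U P), x ∈ Ioo (0 : ℝ) 1 := by
    rw [hU.2, ← Measure.restrict_congr_set Ioo_ae_eq_Icc]
    exact ae_restrict_mem measurableSet_Ioo
  exact (ae_map_iff hU.1.aemeasurable measurableSet_Ioo).mp h

theorem stmt6_general {Ω : Type*} [MeasurableSpace Ω] (P : Measure Ω)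
    (U V : Ω → ℝ) (hU : IsUniform01 P U) (hV : IsUniform01 P V)
    (G H : ℝ → ℝ) (hG : IsCDF G) (hH : IsCDF H) (hst : StOrd G H) :
    P {ω | U ω ≤ V ω} ≤ P {ω | Ginv G (U ω) ≤ Ginv H (V ω)} := by
  apply measure_mono_ae
  filter_upwards [hU.ae_mem_Ioo, hV.ae_mem_Ioo] with ω hUω hVω hle
  exact Ginv_le_Ginv_of_stOrd hG.2.2.1 hH.2.2.2 hst hUω.1 hVω.2 hle

/-- For arbitrary CDFs G ⪯st H (not necessarily in 𝒢), with X := G⁻¹(U),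
Y := H⁻¹(V), one has P(X ≤ Y) ≥ P(U ≤ V). -/
theorem stmt6 {Ω : Type*} [MeasurableSpace Ω] (P : Measure Ω) [IsProbabilityMeasure P]
    (U V : Ω → ℝ) (hU : IsUniform01 P U) (hV : IsUniform01 P V)
    (G H : ℝ → ℝ) (hG : IsCDF G) (hH : IsCDF H) (hst : StOrd G H) :
    P {ω | U ω ≤ V ω} ≤ P {ω | Ginv G (U ω) ≤ Ginv H (V ω)} :=
  stmt6_general P U V hU hV G H hG hH hst
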